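/- Let A be an m×n complex matrix satisfying Property-S. Then for every ε > 0 there exist positive reals ρ₁,…,ρ_m and γ₁,…,γ_n such that the scaled matrix A' with entries a'_{ij} = ρ_i γ_j a_{ij} satisfies: for every row i, ∑_j |a'_{ij}|² ≤ 1 + ε, and for every column j, ∑_i |a'_{ij}|² ≥ m/n − ε. -/

import Mathlib

/-!
Property-S is Hall's condition for the bipartite graph in which every row of `A` is blown up
into `n` copies, every column into `m` copies, and copies are joined where `A` is nonzero. A
perfect matching therefore gives a nonnegative `B` supported where `A` is nonzero, with row sums
`1` and column sums `m / n`. For `p = ‖A‖²` the convex potential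
`∑ p_ij e^(u_i + v_j) - B_ij (u_i + v_j)` is then bounded below, and its partial derivatives are
the row and column sums of `(e^(u_i) p_ij e^(v_j))` minus those of `B`. A differentiable function
bounded below on a Euclidean space has points of arbitrarily small gradient (minimize
`f + δ‖x‖²` for small `δ`), so the scaling exists; `ρ` and `γ` are the square roots of its
factors.
-/

open scoped Classical BigOperators

/-- A matrix satisfies Property-S if every all-zero `a × b` submatrix
satisfies `a/m + b/n ≤ 1`. -/
def PropertyS {F : Type} [Field F] {α β : Type} [Fintype α] [Fintype β]
    (A : Matrix α β F) : Prop :=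
  ∀ (R : Finset α) (C : Finset β), (∀ i ∈ R, ∀ j ∈ C, A i j = 0) →
    (R.card : ℝ) / (Fintype.card α) + (C.card : ℝ) / (Fintype.card β) ≤ 1

open Filter Finset

theorem exists_forall_le_mul_exp_sub_mul {p b : ℝ} (hp : 0 ≤ p) (hb : 0 ≤ b)
    (hpb : p = 0 → b = 0) : ∃ C, ∀ t, C ≤ p * Real.exp t - b * t := by
  rcases hb.eq_or_lt with rfl | hb
  · exact ⟨0, fun t => by simp; positivity⟩
  have hp : 0 < p := hp.lt_of_ne fun h => hb.ne' (hpb h.symm)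
  refine ⟨b - b * Real.log (b / p), fun t => ?_⟩
  have h := Real.add_one_le_exp (t - Real.log (b / p))
  rw [Real.exp_sub, Real.exp_log (by positivity), div_div_eq_mul_div] at h
  have := mul_le_mul_of_nonneg_left h hb.le
  rw [mul_div_cancel₀ _ hb.ne'] at this
  linarith

theorem exists_norm_le_of_hasFDerivAt_of_bddBelow {E : Type*} [NormedAddCommGroup E]
    [InnerProductSpace ℝ E] [FiniteDimensional ℝ E] {f : E → ℝ} {f' : E → E →L[ℝ] ℝ}
    (hf : ∀ x, HasFDerivAt f (f' x) x) (hbdd : BddBelow (Set.range f)) {ε : ℝ} (hε : 0 < ε) :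
    ∃ x, ‖f' x‖ ≤ ε := by
  obtain ⟨L, hL⟩ := hbdd
  replace hL : ∀ x, L ≤ f x := fun x => hL ⟨x, rfl⟩
  set D := f 0 - L
  have hD : 0 ≤ D := sub_nonneg.2 (hL 0)
  set δ := ε ^ 2 / (4 * D + 1)
  have hδ : 0 < δ := by positivity
  set F : E → ℝ := fun x => f x + δ * ‖x‖ ^ 2
  have hF : ∀ x, HasFDerivAt F (f' x + (2 * δ) • innerSL ℝ x) x := fun x => by
    refine ((hf x).add ((hasStrictFDerivAt_norm_sq x).hasFDerivAt.const_smul δ)).congr_fderiv ?_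
    rw [two_smul, smul_add, two_mul, add_smul]
  have hcoercive : Tendsto F (cocompact E) atTop := by
    refine tendsto_atTop_mono (fun x => add_le_add_left (hL x) _) ?_
    exact tendsto_atTop_add_const_left _ _ <|
      ((tendsto_pow_atTop two_ne_zero).comp tendsto_norm_cocompact_atTop).const_mul_atTop hδ
  have hFcont : Continuous F := continuous_iff_continuousAt.2 fun x => (hF x).continuousAt
  obtain ⟨z, hz⟩ := hFcont.exists_forall_le hcoercive
  have hcrit : f' z = -((2 * δ) • innerSL ℝ z) :=
    eq_neg_of_add_eq_zero_left (IsLocalMin.hasFDerivAt_eq_zero (Eventually.of_forall hz) (hF z))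
  have hz0 : δ * ‖z‖ ^ 2 ≤ D := by
    have := hz 0
    simp only [F, norm_zero] at this
    linarith [hL z]
  refine ⟨z, ?_⟩
  rw [hcrit, norm_neg, norm_smul, innerSL_apply_norm, Real.norm_of_nonneg (by positivity)]
  refine abs_le_of_sq_le_sq' ?_ hε.le |>.2
  calc (2 * δ * ‖z‖) ^ 2 = 4 * δ * (δ * ‖z‖ ^ 2) := by ring
    _ ≤ 4 * δ * D := by gcongr
    _ ≤ ε ^ 2 := by
      have : δ * (4 * D + 1) = ε ^ 2 := div_mul_cancel₀ _ (by positivity)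
      nlinarith

section Scaling

variable {α β : Type*} [Fintype α] [Fintype β]

noncomputable def scalingPotential (p B : Matrix α β ℝ) (x : EuclideanSpace ℝ (α ⊕ β)) :
    ℝ :=
  ∑ i, ∑ j, (p i j * Real.exp (x (Sum.inl i) + x (Sum.inr j)) -
    B i j * (x (Sum.inl i) + x (Sum.inr j)))

theorem hasFDerivAt_scalingPotential (p B : Matrix α β ℝ) (x : EuclideanSpace ℝ (α ⊕ β)) :
    HasFDerivAt (scalingPotential p B)
      (∑ i, ∑ j, (p i j * Real.exp (x (Sum.inl i) + x (Sum.inr j)) - B i j) •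
        (EuclideanSpace.proj (𝕜 := ℝ) (Sum.inl i) + EuclideanSpace.proj (Sum.inr j))) x := by
  unfold scalingPotential
  refine HasFDerivAt.fun_sum fun i _ => HasFDerivAt.fun_sum fun j _ => ?_
  have hlin := (EuclideanSpace.proj (𝕜 := ℝ) (Sum.inl i : α ⊕ β) +
    EuclideanSpace.proj (Sum.inr j)).hasFDerivAt (x := x)
  refine ((hlin.exp.const_mul (p i j)).sub (hlin.const_mul (B i j))).congr_fderiv ?_
  rw [sub_smul, smul_smul]
  rfl

theorem bddBelow_range_scalingPotential {p B : Matrix α β ℝ} (hp : ∀ i j, 0 ≤ p i j)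
    (hB : ∀ i j, 0 ≤ B i j) (hpB : ∀ i j, p i j = 0 → B i j = 0) :
    BddBelow (Set.range (scalingPotential p B)) := by
  choose C hC using fun i j => exists_forall_le_mul_exp_sub_mul (hp i j) (hB i j) (hpB i j)
  exact ⟨∑ i, ∑ j, C i j, Set.forall_mem_range.2 fun x =>
    Finset.sum_le_sum fun i _ => Finset.sum_le_sum fun j _ => hC i j _⟩

theorem exists_scaling_approx_marginals {p B : Matrix α β ℝ} (hp : ∀ i j, 0 ≤ p i j)
    (hB : ∀ i j, 0 ≤ B i j) (hpB : ∀ i j, p i j = 0 → B i j = 0) {ε : ℝ} (hε : 0 < ε) :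
    ∃ (x : α → ℝ) (y : β → ℝ), (∀ i, 0 < x i) ∧ (∀ j, 0 < y j) ∧
      (∀ i, |∑ j, x i * p i j * y j - ∑ j, B i j| ≤ ε) ∧
      (∀ j, |∑ i, x i * p i j * y j - ∑ i, B i j| ≤ ε) := by
  obtain ⟨z, hz⟩ := exists_norm_le_of_hasFDerivAt_of_bddBelow (hasFDerivAt_scalingPotential p B)
    (bddBelow_range_scalingPotential hp hB hpB) hε
  have hpartial (k : α ⊕ β) :=
    ContinuousLinearMap.le_of_opNorm_le _ hz (EuclideanSpace.single k (1 : ℝ))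
  refine ⟨fun i => Real.exp (z (Sum.inl i)), fun j => Real.exp (z (Sum.inr j)),
    fun i => Real.exp_pos _, fun j => Real.exp_pos _, fun i => ?_, fun j => ?_⟩
  · simpa [Pi.single_apply, Real.exp_add, mul_assoc, mul_left_comm (Real.exp _)]
      using hpartial (Sum.inl i)
  · simpa [Pi.single_apply, Real.exp_add, mul_assoc, mul_left_comm (Real.exp _)]
      using hpartial (Sum.inr j)

end Scaling

namespace PropertyS

variable {F : Type} [Field F] {α β : Type} [Fintype α] [Fintype β] {A : Matrix α β F}

theorem card_mul_le (hA : PropertyS A) (R : Finset α) :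
    #R * Fintype.card β ≤ #{j | ∃ i ∈ R, A i j ≠ 0} * Fintype.card α := by
  set N : Finset β := {j | ∃ i ∈ R, A i j ≠ 0}
  rcases R.eq_empty_or_nonempty with rfl | ⟨i, hi⟩
  · simp
  rcases isEmpty_or_nonempty β with hβ | hβ
  · simp
  have hm : (0 : ℝ) < Fintype.card α := by exact_mod_cast Fintype.card_pos_iff.2 ⟨i⟩
  have hn : (0 : ℝ) < Fintype.card β := by exact_mod_cast Fintype.card_pos
  have hzero : ∀ i ∈ R, ∀ j ∈ Nᶜ, A i j = 0 := fun i hi j hj => by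
    simp only [N, mem_compl, mem_filter, mem_univ, true_and, not_exists, not_and, not_not] at hj
    exact hj i hi
  have h := hA R Nᶜ hzero
  rw [card_compl, Nat.cast_sub (card_le_univ N), div_add_div _ _ hm.ne' hn.ne',
    div_le_one (by positivity)] at h
  exact_mod_cast (by linarith : (#R : ℝ) * Fintype.card β ≤ #N * Fintype.card α)

theorem exists_transportPlan [Nonempty β] (hA : PropertyS A) :
    ∃ B : Matrix α β ℝ, (∀ i j, 0 ≤ B i j) ∧ (∀ i j, A i j = 0 → B i j = 0) ∧
      (∀ i, ∑ j, B i j = 1) ∧ (∀ j, ∑ i, B i j = Fintype.card α / Fintype.card β) := by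
  have hHall (S : Finset (α × β)) : #S ≤ #{t : β × α | ∃ s ∈ S, A s.1 t.1 ≠ 0} := by
    set R := S.image Prod.fst
    calc #S ≤ #(R ×ˢ (univ : Finset β)) :=
          card_le_card fun s hs => mem_product.2 ⟨mem_image_of_mem _ hs, mem_univ _⟩
      _ ≤ #(({j | ∃ i ∈ R, A i j ≠ 0} : Finset β) ×ˢ (univ : Finset α)) := by
          simpa [card_product] using hA.card_mul_le R
      _ ≤ _ := card_le_card fun t ht => by
          simp only [R, mem_product, mem_filter, mem_univ, true_and, mem_image] at ht ⊢
          obtain ⟨⟨_, ⟨s, hs, rfl⟩, hst⟩, -⟩ := ht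
          exact ⟨s, hs, hst⟩
  obtain ⟨f, hf, hfA⟩ := (Fintype.all_card_le_filter_rel_iff_exists_injective
    (fun (s : α × β) (t : β × α) => A s.1 t.1 ≠ 0)).1 hHall
  have hfb : Function.Bijective f :=
    (Fintype.bijective_iff_injective_and_card f).2 ⟨hf, by simp [mul_comm]⟩
  refine ⟨fun i j => ∑ k, if (f (i, k)).1 = j then (Fintype.card β : ℝ)⁻¹ else 0,
    fun i j => sum_nonneg fun k _ => by positivity, fun i j hij => ?_, fun i => ?_, fun j => ?_⟩
  · exact sum_eq_zero fun k _ => if_neg fun h : (f (i, k)).1 = j => hfA (i, k) (h ▸ hij)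
  · rw [sum_comm]
    simp [Fintype.card_pos.ne']
  · have hreindex : ∑ s : α × β, (if (f s).1 = j then (Fintype.card β : ℝ)⁻¹ else 0)
        = ∑ t : β × α, if t.1 = j then (Fintype.card β : ℝ)⁻¹ else 0 :=
      (Equiv.ofBijective f hfb).sum_comp fun t => if t.1 = j then _ else 0
    rw [← Fintype.sum_prod_type', hreindex, Fintype.sum_prod_type_right]
    simp [div_eq_mul_inv]

end PropertyS

/-- ℓ₂²-scaling: every complex matrix with Property-S admits, for each `ε > 0`,
a scaling with row square-sums at most `1 + ε` and column square-sums at least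
`m/n - ε`. -/
theorem l2_scaling {m n : ℕ} (A : Matrix (Fin m) (Fin n) ℂ)
    (hA : PropertyS A) (ε : ℝ) (hε : 0 < ε) :
    ∃ (ρ : Fin m → ℝ) (γ : Fin n → ℝ), (∀ i, 0 < ρ i) ∧ (∀ j, 0 < γ j) ∧
      (∀ i : Fin m, ∑ j : Fin n, ‖(ρ i : ℂ) * (γ j : ℂ) * A i j‖ ^ 2 ≤ 1 + ε) ∧
      (∀ j : Fin n, (m : ℝ) / n - ε ≤ ∑ i : Fin m, ‖(ρ i : ℂ) * (γ j : ℂ) * A i j‖ ^ 2) := by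
  rcases isEmpty_or_nonempty (Fin n) with hn | hn
  · exact ⟨1, 1, fun _ => one_pos, fun _ => one_pos, fun _ => by simp; positivity, hn.elim⟩
  obtain ⟨B, hB, hAB, hrow, hcol⟩ := hA.exists_transportPlan
  obtain ⟨x, y, hx, hy, hrows, hcols⟩ :=
    exists_scaling_approx_marginals (p := fun i j => ‖A i j‖ ^ 2) (fun _ _ => by positivity) hB
      (fun i j h => hAB i j (by simpa using h)) hε
  have hnorm (i j) :
      ‖(√(x i) : ℂ) * (√(y j) : ℂ) * A i j‖ ^ 2 = x i * ‖A i j‖ ^ 2 * y j := by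
    rw [norm_mul, norm_mul, Complex.norm_real, Complex.norm_real, mul_pow, mul_pow,
      Real.norm_of_nonneg (Real.sqrt_nonneg _), Real.norm_of_nonneg (Real.sqrt_nonneg _),
      Real.sq_sqrt (hx i).le, Real.sq_sqrt (hy j).le]
    ring
  refine ⟨fun i => √(x i), fun j => √(y j), fun i => Real.sqrt_pos.2 (hx i),
    fun j => Real.sqrt_pos.2 (hy j), fun i => ?_, fun j => ?_⟩
  · have := (abs_le.1 (hrows i)).2
    simp only [hnorm]
    linarith [hrow i]
  · have := (abs_le.1 (hcols j)).1
    simp only [hnorm]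
    rw [hcol, Fintype.card_fin, Fintype.card_fin] at this
    linarith
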